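/- (Robustness of the doubly robust functional under correct outcome models.) Fix a* ∈ {0,1} and suppose c := μ(A=a*, S=0) > 0 and that every w with μ(W=w) > 0 satisfies μ(W=w, A=1, S=1) > 0 and μ(W=w, A=0, S=1) > 0. Let g*₍a*,0₎, g*₍1,1₎, g*₍0,1₎ : 𝒲 → ℝ be arbitrary functions with g*₍1,1₎ and g*₍0,1₎ strictly positive (possibly misspecified propensity limits). Then, with the TRUE outcome regressions m₁, m₀, E_μ[ 1{A=1,S=1}·g*₍a*,0₎(W)/(c·g*₍1,1₎(W))·(ΔY − m₁(W)) − 1{A=0,S=1}·g*₍a*,0₎(W)/(c·g*₍0,1₎(W))·(ΔY − m₀(W)) + (1{A=a*,S=0}/c)·(m₁(W) − m₀(W)) ] = ψ(a*). -/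

import Mathlib

open MeasureTheory ProbabilityTheory
open scoped Classical

noncomputable section

/-- Conditional expectation of `X` given the event `E`. -/
def cexp {Ω : Type*} [MeasurableSpace Ω] (μ : Measure Ω) (X : Ω → ℝ) (E : Set Ω) : ℝ :=
  ∫ ω, X ω ∂(μ[|E])

/-- The event `{W = w, A = a, S = s}`. -/
def evtWAS {Ω 𝒲 : Type*} (W : Ω → 𝒲) (A S : Ω → Bool) (w : 𝒲) (a s : Bool) : Set Ω :=
  {ω | W ω = w ∧ A ω = a ∧ S ω = s}

/-- The event `{A = a, S = s}`. -/
def evtAS {Ω : Type*} (A S : Ω → Bool) (a s : Bool) : Set Ω :=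
  {ω | A ω = a ∧ S ω = s}

/-- The outcome-difference regression `m_a(w) = E[Y₁ - Y₀ | W = w, A = a, S = 1]`. -/
def mfun {Ω 𝒲 : Type*} [MeasurableSpace Ω] (μ : Measure Ω) (W : Ω → 𝒲) (A S : Ω → Bool)
    (Y₀ Y₁ : Ω → ℝ) (a : Bool) (w : 𝒲) : ℝ :=
  cexp μ (fun ω => Y₁ ω - Y₀ ω) (evtWAS W A S w a true)

/-- The true propensity `g_{a,s}(w) = μ({A = a, S = s} | {W = w})`. -/
def gprop {Ω 𝒲 : Type*} [MeasurableSpace Ω] (μ : Measure Ω) (W : Ω → 𝒲) (A S : Ω → Bool)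
    (a s : Bool) (w : 𝒲) : ℝ :=
  ((μ[|{ω | W ω = w}]) {ω | A ω = a ∧ S ω = s}).toReal

/-- The target statistical parameter `ψ(a*) = E[m₁(W) − m₀(W) | A = a*, S = 0]`. -/
def psiParam {Ω 𝒲 : Type*} [MeasurableSpace Ω] (μ : Measure Ω) (W : Ω → 𝒲) (A S : Ω → Bool)
    (Y₀ Y₁ : Ω → ℝ) (astar : Bool) : ℝ :=
  cexp μ (fun ω => mfun μ W A S Y₀ Y₁ true (W ω) - mfun μ W A S Y₀ Y₁ false (W ω))
    (evtAS A S astar false)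

/-! On each stratum `{W = w, A = a, S = 1}` the propensity weight is a constant, and the residual
`ΔY - m_a(w)` integrates to zero there because `m_a(w)` is the mean of `ΔY` on that stratum. Hence
both augmentation terms vanish whatever the propensity limits are, and the plug-in term integrates
to `E[m₁(W) - m₀(W) | A = a*, S = 0] = ψ(a*)`. -/

section ConditionalMean

variable {Ω : Type*} [MeasurableSpace Ω] {μ : Measure Ω} {X : Ω → ℝ} {E : Set Ω}

lemma cexp_eq_inv_mul_setIntegral (μ : Measure Ω) (X : Ω → ℝ) (E : Set Ω) :
    cexp μ X E = (μ E).toReal⁻¹ * ∫ ω in E, X ω ∂μ := by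
  rw [cexp, ProbabilityTheory.cond, integral_smul_measure, ENNReal.toReal_inv, smul_eq_mul]

lemma integral_indicator_one_div_mul_eq_cexp (hE : MeasurableSet E) :
    ∫ ω, E.indicator (fun ω => 1 / (μ E).toReal * X ω) ω ∂μ = cexp μ X E := by
  rw [integral_indicator hE, integral_const_mul, one_div, cexp_eq_inv_mul_setIntegral]

lemma setIntegral_sub_cexp_eq_zero (hX : IntegrableOn X E μ) (hE : μ E ≠ ⊤) :
    ∫ ω in E, (X ω - cexp μ X E) ∂μ = 0 := by
  by_cases hE₀ : μ E = 0
  · rw [Measure.restrict_eq_zero.mpr hE₀, integral_zero_measure]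
  have hE_real : μ.real E ≠ 0 := ENNReal.toReal_ne_zero.mpr ⟨hE₀, hE⟩
  have : Fact (μ E < ⊤) := ⟨hE.lt_top⟩
  rw [integral_sub hX (integrable_const _), setIntegral_const, cexp_eq_inv_mul_setIntegral,
    smul_eq_mul, ← measureReal_def, mul_inv_cancel_left₀ hE_real, sub_self]

variable [IsFiniteMeasure μ]

lemma integrable_indicator_const_mul_sub_cexp (hE : MeasurableSet E) (hX : Integrable X μ)
    (k : ℝ) : Integrable (E.indicator fun ω => k * (X ω - cexp μ X E)) μ :=
  ((hX.sub (integrable_const _)).const_mul k).indicator hE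

lemma integral_indicator_const_mul_sub_cexp (hE : MeasurableSet E) (hX : Integrable X μ)
    (k : ℝ) : ∫ ω, E.indicator (fun ω => k * (X ω - cexp μ X E)) ω ∂μ = 0 := by
  rw [integral_indicator hE, integral_const_mul,
    setIntegral_sub_cexp_eq_zero hX.integrableOn (measure_ne_top μ E), mul_zero]

end ConditionalMean

lemma ite_comp_eq_sum_indicator {Ω 𝒲 M : Type*} [Fintype 𝒲] [AddCommMonoid M] (W : Ω → 𝒲)
    (p : Ω → Prop) [DecidablePred p] (φ : 𝒲 → Ω → M) (ω : Ω) :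
    (if p ω then φ (W ω) ω else 0) = ∑ w, {ω | W ω = w ∧ p ω}.indicator (φ w) ω := by
  by_cases hp : p ω <;> simp [Set.indicator_apply, hp]

lemma integrable_comp_of_finite {Ω 𝒲 : Type*} [MeasurableSpace Ω] {μ : Measure Ω}
    [IsFiniteMeasure μ] [Finite 𝒲] [MeasurableSpace 𝒲] [MeasurableSingletonClass 𝒲]
    {W : Ω → 𝒲} (hW : Measurable W) (h : 𝒲 → ℝ) : Integrable (fun ω => h (W ω)) μ :=
  Integrable.comp_measurable (g := h) .of_finite hW

lemma measurableSet_evtWAS {Ω 𝒲 : Type*} [MeasurableSpace Ω] [MeasurableSpace 𝒲]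
    [MeasurableSingletonClass 𝒲] {W : Ω → 𝒲} {A S : Ω → Bool} (hW : Measurable W)
    (hA : Measurable A) (hS : Measurable S) (w : 𝒲) (a s : Bool) :
    MeasurableSet (evtWAS W A S w a s) :=
  (hW (measurableSet_singleton w)).inter
    ((hA (measurableSet_singleton a)).inter (hS (measurableSet_singleton s)))

lemma measurableSet_evtAS {Ω : Type*} [MeasurableSpace Ω] {A S : Ω → Bool}
    (hA : Measurable A) (hS : Measurable S) (a s : Bool) : MeasurableSet (evtAS A S a s) :=
  (hA (measurableSet_singleton a)).inter (hS (measurableSet_singleton s))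

lemma ite_evtAS_eq_indicator {Ω M : Type*} [Zero M] (A S : Ω → Bool) (a s : Bool) (f : Ω → M) :
    (fun ω => if A ω = a ∧ S ω = s then f ω else 0) = (evtAS A S a s).indicator f :=
  funext fun ω => by simp only [Set.indicator_apply, evtAS, Set.mem_ofPred_eq]

lemma integral_ite_evtAS_eq_cexp {Ω : Type*} [MeasurableSpace Ω] {μ : Measure Ω}
    {A S : Ω → Bool} (hA : Measurable A) (hS : Measurable S) (a s : Bool) (X : Ω → ℝ) :
    ∫ ω, (if A ω = a ∧ S ω = s then 1 / (μ (evtAS A S a s)).toReal * X ω else 0) ∂μ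
      = cexp μ X (evtAS A S a s) := by
  rw [ite_evtAS_eq_indicator,
    integral_indicator_one_div_mul_eq_cexp (measurableSet_evtAS hA hS a s)]

section Strata

variable {Ω 𝒲 : Type*} [MeasurableSpace Ω] [Fintype 𝒲] (μ : Measure Ω) (W : Ω → 𝒲)
  (A S : Ω → Bool) (Y₀ Y₁ : Ω → ℝ)

lemma outcomeResidual_eq_sum_indicator (k : 𝒲 → ℝ) (a : Bool) :
    (fun ω => if A ω = a ∧ S ω = true then
        k (W ω) * ((Y₁ ω - Y₀ ω) - mfun μ W A S Y₀ Y₁ a (W ω)) else 0)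
      = fun ω => ∑ w, (evtWAS W A S w a true).indicator (fun ω => k w *
          ((Y₁ ω - Y₀ ω) - cexp μ (fun ω => Y₁ ω - Y₀ ω) (evtWAS W A S w a true))) ω :=
  funext <| ite_comp_eq_sum_indicator W (fun ω => A ω = a ∧ S ω = true)
    fun w ω => k w * ((Y₁ ω - Y₀ ω) - mfun μ W A S Y₀ Y₁ a w)

variable [MeasurableSpace 𝒲] [MeasurableSingletonClass 𝒲] [IsFiniteMeasure μ] {W A S Y₀ Y₁}

lemma integrable_outcomeResidual (hW : Measurable W) (hA : Measurable A) (hS : Measurable S)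
    (hΔY : Integrable (fun ω => Y₁ ω - Y₀ ω) μ) (k : 𝒲 → ℝ) (a : Bool) :
    Integrable (fun ω => if A ω = a ∧ S ω = true then
      k (W ω) * ((Y₁ ω - Y₀ ω) - mfun μ W A S Y₀ Y₁ a (W ω)) else 0) μ := by
  rw [outcomeResidual_eq_sum_indicator]
  exact integrable_finsetSum _ fun w _ => integrable_indicator_const_mul_sub_cexp
    (measurableSet_evtWAS hW hA hS w a true) hΔY (k w)

lemma integral_outcomeResidual_eq_zero (hW : Measurable W) (hA : Measurable A)
    (hS : Measurable S) (hΔY : Integrable (fun ω => Y₁ ω - Y₀ ω) μ) (k : 𝒲 → ℝ) (a : Bool) :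
    ∫ ω, (if A ω = a ∧ S ω = true then
      k (W ω) * ((Y₁ ω - Y₀ ω) - mfun μ W A S Y₀ Y₁ a (W ω)) else 0) ∂μ = 0 := by
  rw [outcomeResidual_eq_sum_indicator, integral_finsetSum _ fun w _ =>
    integrable_indicator_const_mul_sub_cexp (measurableSet_evtWAS hW hA hS w a true) hΔY (k w)]
  exact Finset.sum_eq_zero fun w _ => integral_indicator_const_mul_sub_cexp
    (measurableSet_evtWAS hW hA hS w a true) hΔY (k w)

end Strata

theorem dr_functional_correct_outcome_models_general
    {Ω : Type*} [MeasurableSpace Ω] (μ : Measure Ω) [IsProbabilityMeasure μ]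
    {𝒲 : Type*} [Fintype 𝒲] [MeasurableSpace 𝒲] [MeasurableSingletonClass 𝒲]
    (S A : Ω → Bool) (W : Ω → 𝒲) (Y₀ Y₁ : Ω → ℝ)
    (hS : Measurable S) (hA : Measurable A) (hW : Measurable W)
    (hY₀ : Integrable Y₀ μ) (hY₁ : Integrable Y₁ μ)
    (astar : Bool)
    (gstar_a0 gstar11 gstar01 : 𝒲 → ℝ) :
    ∫ ω,
      ((if A ω = true ∧ S ω = true then
          gstar_a0 (W ω) / ((μ (evtAS A S astar false)).toReal * gstar11 (W ω))
            * ((Y₁ ω - Y₀ ω) - mfun μ W A S Y₀ Y₁ true (W ω))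
        else 0)
      - (if A ω = false ∧ S ω = true then
          gstar_a0 (W ω) / ((μ (evtAS A S astar false)).toReal * gstar01 (W ω))
            * ((Y₁ ω - Y₀ ω) - mfun μ W A S Y₀ Y₁ false (W ω))
        else 0)
      + (if A ω = astar ∧ S ω = false then
          (1 / (μ (evtAS A S astar false)).toReal)
            * (mfun μ W A S Y₀ Y₁ true (W ω) - mfun μ W A S Y₀ Y₁ false (W ω))
        else 0)) ∂μ
    = psiParam μ W A S Y₀ Y₁ astar := by
  have hΔY : Integrable (fun ω => Y₁ ω - Y₀ ω) μ := hY₁.sub hY₀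
  set k₁ := fun w => gstar_a0 w / ((μ (evtAS A S astar false)).toReal * gstar11 w)
  set k₀ := fun w => gstar_a0 w / ((μ (evtAS A S astar false)).toReal * gstar01 w)
  have h₁ := integrable_outcomeResidual μ hW hA hS hΔY k₁ true
  have h₀ := integrable_outcomeResidual μ hW hA hS hΔY k₀ false
  rw [integral_add, integral_sub h₁ h₀,
    integral_outcomeResidual_eq_zero μ hW hA hS hΔY k₁ true,
    integral_outcomeResidual_eq_zero μ hW hA hS hΔY k₀ false,
    integral_ite_evtAS_eq_cexp hA hS, sub_zero, zero_add, psiParam]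
  · exact h₁.sub h₀
  · rw [ite_evtAS_eq_indicator]
    exact (((integrable_comp_of_finite hW _).sub (integrable_comp_of_finite hW _)).const_mul
      _).indicator (measurableSet_evtAS hA hS astar false)

/-- the doubly robust functional recovers `ψ(a*)` when the outcome
regressions are correct, for arbitrary (possibly misspecified) propensity limits. -/
theorem dr_functional_correct_outcome_models
    {Ω : Type*} [MeasurableSpace Ω] (μ : Measure Ω) [IsProbabilityMeasure μ]
    {𝒲 : Type*} [Fintype 𝒲] [MeasurableSpace 𝒲] [MeasurableSingletonClass 𝒲]
    (S A : Ω → Bool) (W : Ω → 𝒲) (Y₀ Y₁ : Ω → ℝ)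
    (hS : Measurable S) (hA : Measurable A) (hW : Measurable W)
    (hY₀ : Integrable Y₀ μ) (hY₁ : Integrable Y₁ μ)
    (astar : Bool)
    (hc : 0 < μ (evtAS A S astar false))
    (hpos : ∀ w : 𝒲, 0 < μ {ω | W ω = w} →
      0 < μ (evtWAS W A S w true true) ∧ 0 < μ (evtWAS W A S w false true))
    (gstar_a0 gstar11 gstar01 : 𝒲 → ℝ)
    (hg11 : ∀ w, 0 < gstar11 w) (hg01 : ∀ w, 0 < gstar01 w) :
    ∫ ω,
      ((if A ω = true ∧ S ω = true then
          gstar_a0 (W ω) / ((μ (evtAS A S astar false)).toReal * gstar11 (W ω))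
            * ((Y₁ ω - Y₀ ω) - mfun μ W A S Y₀ Y₁ true (W ω))
        else 0)
      - (if A ω = false ∧ S ω = true then
          gstar_a0 (W ω) / ((μ (evtAS A S astar false)).toReal * gstar01 (W ω))
            * ((Y₁ ω - Y₀ ω) - mfun μ W A S Y₀ Y₁ false (W ω))
        else 0)
      + (if A ω = astar ∧ S ω = false then
          (1 / (μ (evtAS A S astar false)).toReal)
            * (mfun μ W A S Y₀ Y₁ true (W ω) - mfun μ W A S Y₀ Y₁ false (W ω))
        else 0)) ∂μ
    = psiParam μ W A S Y₀ Y₁ astar :=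
  dr_functional_correct_outcome_models_general μ S A W Y₀ Y₁ hS hA hW hY₀ hY₁ astar gstar_a0 gstar11
    gstar01

end
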